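/- arXiv:2308.00054 — 2 statements merged into one kernel-verified Lean document; each statement's English description precedes it below -/
import Mathlib

section
/- Let T be a finite tree with diameter d and let k > 0 be an integer. If k < d < 2k, then \u03b3^\u221e_{all,k}(T) = 2, and if d \u2264 k, then \u03b3^\u221e_{all,k}(T) = 1. -/
open SimpleGraph

universe u v

namespace EternalDom

variable {V : Type u} {W : Type v}

/-- `x` is within distance `k` of `y` in `G` (in particular, a path between them exists). -/
def WithinDist (G : SimpleGraph V) (k : ℕ) (x y : V) : Prop :=
  G.Reachable x y ∧ G.dist x y ≤ k

/-- A multiset of guards is distance-`k` dominating: every vertex is within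
distance `k` of some guard. -/
def IsDistKDomMultiset (G : SimpleGraph V) (k : ℕ) (D : Multiset V) : Prop :=
  ∀ w : V, ∃ x ∈ D, WithinDist G k x w

/-- `F` is an eternal distance-`k` defence family of guard configurations of size `m`:
a nonempty family of distance-`k` dominating multisets, all of cardinality `m`, such that
for every configuration `D ∈ F` and every attacked vertex `w` there is a configuration
`D' ∈ F` containing `w` that is obtained from `D` by a matching (bijection) moving each
guard a distance of at most `k`. -/
def IsEternalFamily (G : SimpleGraph V) (k m : ℕ) (F : Set (Multiset V)) : Prop :=
  F.Nonempty ∧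
    (∀ D ∈ F, Multiset.card D = m ∧ IsDistKDomMultiset G k D) ∧
    (∀ D ∈ F, ∀ w : V, ∃ D' ∈ F, w ∈ D' ∧ Multiset.Rel (WithinDist G k) D D')

/-- The eternal distance-`k` domination number `γ^∞_{all,k}(G)`. -/
noncomputable def eternalNum (G : SimpleGraph V) (k : ℕ) : ℕ :=
  sInf {m | ∃ F : Set (Multiset V), IsEternalFamily G k m F}

/-- `x` dominates `w`: they are equal or adjacent. -/
def Dominates (G : SimpleGraph V) (x w : V) : Prop := w = x ∨ G.Adj x w

/-- A dominating set of vertices. -/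
def IsDomSet (G : SimpleGraph V) (D : Set V) : Prop := ∀ w : V, ∃ x ∈ D, Dominates G x w

/-- The domination number `γ(G)`. -/
noncomputable def domNum (G : SimpleGraph V) : ℕ :=
  sInf {n | ∃ D : Set V, IsDomSet G D ∧ D.ncard = n}

/-- A distance-`k` dominating set of vertices. -/
def IsDistKDomSet (G : SimpleGraph V) (k : ℕ) (D : Set V) : Prop :=
  ∀ w : V, ∃ x ∈ D, WithinDist G k x w

/-- The distance-`k` domination number `γ_k(G)`. -/
noncomputable def distDomNum (G : SimpleGraph V) (k : ℕ) : ℕ :=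
  sInf {n | ∃ D : Set V, IsDistKDomSet G k D ∧ D.ncard = n}

/-- A leaf: a vertex of degree 1, i.e. with a unique neighbour. -/
def IsLeafV (G : SimpleGraph V) (x : V) : Prop := ∃! y, G.Adj x y

/-- A stem: a vertex adjacent to at least one leaf. -/
def IsStem (G : SimpleGraph V) (x : V) : Prop := ∃ y, G.Adj x y ∧ IsLeafV G y

/-- `k`-leaves: a `0`-leaf is a leaf; for `k > 0`, `v` is a `k`-leaf iff `v` is adjacent to
some `(k-1)`-leaf and all but at most one of the neighbours of `v` are `t`-leaves for some
`t < k`. -/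
def IsKLeaf (G : SimpleGraph V) : ℕ → V → Prop
  | 0, v => IsLeafV G v
  | (k + 1), v =>
      (∃ u, G.Adj v u ∧ IsKLeaf G k u) ∧
        ∃ w : V, ∀ x : V, G.Adj v x → x ≠ w → ∃ t, ∃ _ : t ≤ k, IsKLeaf G t x
  termination_by k _ => k
  decreasing_by all_goals omega

/-- For a 2-leaf `v`, the set `L(v)`: the union of `L[u]` over all neighbours `u` of `v`
which are 0-leaves or 1-leaves, where for a 1-leaf `u`, `L[u]` consists of `u` and the leaves
adjacent to `u`. -/
def Lopen (G : SimpleGraph V) (v : V) : Set V :=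
  {x | ∃ u, G.Adj v u ∧
    ((IsKLeaf G 0 u ∧ x = u) ∨
      (IsKLeaf G 1 u ∧ (x = u ∨ (G.Adj u x ∧ IsKLeaf G 0 x))))}

/-- For a 2-leaf `v`, the set `L[v] = L(v) ∪ {v}`. -/
def Lclosed (G : SimpleGraph V) (v : V) : Set V := insert v (Lopen G v)

/-- A graph is eternal distance-2 domination critical if deleting any non-cut vertex
(one whose removal leaves the graph connected) strictly decreases the eternal
distance-2 domination number. -/
def EternalCritical (G : SimpleGraph V) : Prop :=
  ∀ x : V, (G.induce {y | y ≠ x}).Connected →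
    eternalNum (G.induce {y | y ≠ x}) 2 < eternalNum G 2

/-- Attach a pendant path `x₁ x₂ … xₙ` on `n` new vertices to the vertex `y`,
via the edge `y x₁`. -/
def attachPath (G : SimpleGraph V) (y : V) (n : ℕ) : SimpleGraph (V ⊕ Fin n) :=
  G.map Sum.inl ⊔ (pathGraph n).map Sum.inr ⊔
    fromEdgeSet {e | ∃ h : 0 < n, e = s(Sum.inl y, Sum.inr ⟨0, h⟩)}

/-- The star `K_{1,m}`: centre `0`, leaves the `m` nonzero elements of `Fin (m+1)`. -/
def starGraph (m : ℕ) : SimpleGraph (Fin (m + 1)) where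
  Adj x y := (x = 0 ∧ y ≠ 0) ∨ (y = 0 ∧ x ≠ 0)
  symm := by tauto
  loopless := ⟨by rintro x (⟨h1, h2⟩ | ⟨h1, h2⟩) <;> exact h2 h1⟩

/-- Disjoint union of `G` and the star `K_{1,m}` together with one edge joining the
vertex `a` of the star to the vertex `y` of `G`. -/
def attachStar (G : SimpleGraph V) (y : V) (m : ℕ) (a : Fin (m + 1)) :
    SimpleGraph (V ⊕ Fin (m + 1)) :=
  G.map Sum.inl ⊔ (starGraph m).map Sum.inr ⊔
    fromEdgeSet {s(Sum.inl y, Sum.inr a)}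

/-- From `G` and a vertex `v`: add a new star `K_{1,m}` joined by an edge from its centre
to `v`, together with `t` new leaves adjacent to `v`. -/
def addStarAndLeaves (G : SimpleGraph V) (v : V) (m t : ℕ) :
    SimpleGraph (V ⊕ (Fin (m + 1) ⊕ Fin t)) :=
  G.map Sum.inl ⊔
    (starGraph m).map (Sum.inr ∘ Sum.inl) ⊔
    fromEdgeSet ({s(Sum.inl v, Sum.inr (Sum.inl 0))} ∪
      {e | ∃ i : Fin t, e = s(Sum.inl v, Sum.inr (Sum.inr i))})

/-- From `G` and a vertex `v`: add two new stars `K_{1,m}` and `K_{1,M}`, joining the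
centre of each new star to `v` by an edge. -/
def addTwoStars (G : SimpleGraph V) (v : V) (m M : ℕ) :
    SimpleGraph (V ⊕ (Fin (m + 1) ⊕ Fin (M + 1))) :=
  G.map Sum.inl ⊔
    (starGraph m).map (Sum.inr ∘ Sum.inl) ⊔
    (starGraph M).map (Sum.inr ∘ Sum.inr) ⊔
    fromEdgeSet {s(Sum.inl v, Sum.inr (Sum.inl 0)), s(Sum.inl v, Sum.inr (Sum.inr 0))}

/-- The 1-sum of `G` and `H` at the vertex `u` of `G` and the vertex `w` of `H`:
the disjoint union of `G` and `H` with `u` and `w` identified. -/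
def oneSum (G : SimpleGraph V) (H : SimpleGraph W) (u : V) (w : W) :
    SimpleGraph (V ⊕ {x : W // x ≠ w}) where
  Adj x y :=
    match x, y with
    | Sum.inl a, Sum.inl b => G.Adj a b
    | Sum.inr a, Sum.inr b => H.Adj a.1 b.1
    | Sum.inl a, Sum.inr b => a = u ∧ H.Adj w b.1
    | Sum.inr a, Sum.inl b => b = u ∧ H.Adj w a.1
  symm := ⟨by
    rintro (a | a) (b | b) h
    · exact h.symm
    · exact h
    · exact h
    · exact h.symm⟩
  loopless := ⟨by
    rintro (a | a) h
    · exact G.loopless.irrefl a h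
    · exact H.loopless.irrefl a.1 h⟩

end EternalDom

/-!
One guard suffices iff every vertex is within distance `k` of every other, i.e. `diam ≤ k`:
after answering an attack at one end of a diametral path it must still protect the other end.
Two guards suffice as soon as some vertex `c` has eccentricity at most `k`: the guard on `c`
answers each attack while the other guard moves to `c`. In a tree of diameter `d ≤ 2k` such a
`c` is the vertex at distance `d - k` from one end `u` of a diametral path `u ⋯ v`: every vertex
`w` has a projection `z` on that path with `dist(u,w) = dist(u,z) + dist(z,w)` and likewise for
`v`, so `dist(z,w)` is at most both `dist(u,z)` and `dist(z,v)`.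
-/
namespace SimpleGraph

variable {V : Type u} {G : SimpleGraph V}

theorem Walk.dist_getVert_le {u v : V} (p : G.Walk u v) {i j : ℕ} (hij : i ≤ j) :
    G.dist (p.getVert i) (p.getVert j) ≤ j - i := by
  calc G.dist (p.getVert i) (p.getVert j)
      = G.dist (p.getVert i) ((p.drop i).getVert (j - i)) := by
        rw [Walk.drop_getVert, Nat.add_sub_cancel' hij]
    _ ≤ ((p.drop i).take (j - i)).length := G.dist_le _
    _ ≤ j - i := by simp

theorem Walk.IsPath.append_of_support_inter {u v w : V} {p : G.Walk u v} {q : G.Walk v w}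
    (hp : p.IsPath) (hq : q.IsPath) (h : ∀ x ∈ p.support, x ∈ q.support → x = v) :
    (p.append q).IsPath := by
  rw [Walk.isPath_def, Walk.support_append]
  have hq' := hq.support_nodup
  rw [← Walk.cons_tail_support q, List.nodup_cons] at hq'
  refine hp.support_nodup.append hq'.2 fun x hxp hxq => ?_
  obtain rfl := h x hxp (List.mem_of_mem_tail hxq)
  exact hq'.1 hxq

theorem Walk.exists_split_at_first_mem (S : Set V) {w c : V} (q : G.Walk w c) (hc : c ∈ S) :
    ∃ z ∈ S, ∃ (q₁ : G.Walk w z) (q₂ : G.Walk z c), q = q₁.append q₂ ∧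
      ∀ x ∈ q₁.support, x ∈ S → x = z := by
  induction q with
  | nil => exact ⟨_, hc, Walk.nil, Walk.nil, rfl, by simp⟩
  | @cons a b c' h q ih =>
    by_cases ha : a ∈ S
    · exact ⟨a, ha, Walk.nil, Walk.cons h q, rfl, by simp⟩
    · obtain ⟨z, hz, q₁, q₂, rfl, hfirst⟩ := ih hc
      refine ⟨z, hz, Walk.cons h q₁, q₂, rfl, fun x hx hxS => ?_⟩
      rw [Walk.support_cons, List.mem_cons] at hx
      rcases hx with rfl | hx
      · exact absurd hxS ha
      · exact hfirst x hx hxS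

theorem IsAcyclic.length_eq_dist_of_isPath (hG : G.IsAcyclic) {u v : V} {p : G.Walk u v}
    (hp : p.IsPath) : p.length = G.dist u v := by
  obtain ⟨q, hq, hql⟩ := p.reachable.exists_path_of_dist
  rw [← hql, Subtype.mk.inj ((hG.subsingleton_path u v).elim ⟨p, hp⟩ ⟨q, hq⟩)]

theorem IsTree.exists_mem_support_dist_eq_add (hG : G.IsTree) {u v : V} {p : G.Walk u v}
    (hp : p.IsPath) (w : V) : ∃ z ∈ p.support,
      G.dist u w = G.dist u z + G.dist z w ∧ G.dist v w = G.dist v z + G.dist z w := by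
  classical
  obtain ⟨z, hz, q₁, q₂, hsplit, hfirst⟩ :=
    Walk.exists_split_at_first_mem {x | x ∈ p.support} (hG.connected w u).some.bypass
      p.start_mem_support
  have hq₁ : q₁.IsPath := (hsplit ▸ (hG.connected w u).some.bypass_isPath).of_append_left
  have through_z : ∀ {y : V} (r : G.Walk y z), r.IsPath → r.support ⊆ p.support →
      G.dist y w = G.dist y z + G.dist z w := by
    intro y r hr hrp
    have hpath : (r.append q₁.reverse).IsPath :=
      hr.append_of_support_inter hq₁.reverse fun x hxr hxq =>
        hfirst x (by simpa using hxq) (hrp hxr)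
    rw [← hG.isAcyclic.length_eq_dist_of_isPath hpath, Walk.length_append, Walk.length_reverse,
      hG.isAcyclic.length_eq_dist_of_isPath hr, hG.isAcyclic.length_eq_dist_of_isPath hq₁,
      dist_comm (u := w)]
  exact ⟨z, hz, through_z _ (hp.takeUntil hz) (p.support_takeUntil_subset_support hz),
    through_z _ (hp.dropUntil hz).reverse
      (by simpa using p.support_dropUntil_subset_support hz)⟩

theorem IsTree.dist_getVert_le_max (hG : G.IsTree) {u v : V} {p : G.Walk u v} (hp : p.IsPath)
    (hdiam : ∀ x y, G.dist x y ≤ p.length) (i : ℕ) (w : V) :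
    G.dist (p.getVert i) w ≤ max i (p.length - i) := by
  obtain ⟨z, hz, huw, hvw⟩ := hG.exists_mem_support_dist_eq_add hp w
  obtain ⟨j, rfl, hj⟩ := Walk.mem_support_iff_exists_getVert.1 hz
  have huz : G.dist u (p.getVert j) ≤ j := by
    simpa using p.dist_getVert_le (Nat.zero_le j)
  have hvz : G.dist v (p.getVert j) ≤ p.length - j := by
    have := p.dist_getVert_le hj
    rwa [Walk.getVert_length, dist_comm] at this
  have hiz : G.dist (p.getVert i) (p.getVert j) ≤ max (j - i) (i - j) := by
    rcases le_total i j with hle | hle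
    · exact (p.dist_getVert_le hle).trans (le_max_left _ _)
    · exact dist_comm ▸ (p.dist_getVert_le hle).trans (le_max_right _ _)
  have huv := hG.connected.dist_triangle (u := u) (v := p.getVert j) (w := v)
  rw [dist_comm (u := p.getVert j) (v := v), ← hG.isAcyclic.length_eq_dist_of_isPath hp] at huv
  have hiw := hG.connected.dist_triangle (u := p.getVert i) (v := p.getVert j) (w := w)
  have := hdiam u w
  have := hdiam v w
  omega

theorem IsTree.exists_eccent_le (hG : G.IsTree) {k : ℕ} (h : G.ediam ≤ 2 * k) :
    ∃ c, G.eccent c ≤ k := by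
  have : Nonempty V := hG.connected.nonempty
  have dist_le_iff (x y : V) (n : ℕ) : G.dist x y ≤ n ↔ G.edist x y ≤ n := by
    rw [← (hG.connected x y).coe_dist_eq_edist, Nat.cast_le]
  obtain ⟨u, v, huv⟩ := G.exists_edist_eq_ediam_of_ne_top <|
    ne_top_of_le_ne_top (by norm_cast; exact ENat.natCast_ne_top _) h
  obtain ⟨p, hp, hlen⟩ := hG.connected.exists_path_of_dist u v
  have hlen' : (p.length : ℕ∞) = G.ediam := by
    rw [hlen, (hG.connected u v).coe_dist_eq_edist, huv]
  have hdiam (x y : V) : G.dist x y ≤ p.length := by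
    rw [dist_le_iff, hlen']
    exact G.edist_le_ediam
  have hd : p.length ≤ 2 * k := by
    rw [← Nat.cast_le (α := ℕ∞), hlen']
    exact_mod_cast h
  refine ⟨p.getVert (p.length - k), (G.eccent_le_iff _ _).2 fun w => (dist_le_iff _ _ _).1 ?_⟩
  exact (hG.dist_getVert_le_max hp hdiam (p.length - k) w).trans (by omega)

end SimpleGraph

namespace EternalDom

variable {V : Type u} {G : SimpleGraph V} {k : ℕ}

theorem withinDist_iff_edist_le {x y : V} : WithinDist G k x y ↔ G.edist x y ≤ k := by
  constructor
  · rintro ⟨hxy, hk⟩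
    rw [← hxy.coe_dist_eq_edist]
    exact_mod_cast hk
  · intro h
    have hxy := G.reachable_of_edist_ne_top (ne_top_of_le_ne_top (ENat.natCast_ne_top k) h)
    rw [← hxy.coe_dist_eq_edist] at h
    exact ⟨hxy, by exact_mod_cast h⟩

theorem WithinDist.symm {x y : V} (h : WithinDist G k x y) : WithinDist G k y x :=
  withinDist_iff_edist_le.2 (G.edist_comm ▸ withinDist_iff_edist_le.1 h)

theorem IsEternalFamily.pos [Nonempty V] {m : ℕ} {F : Set (Multiset V)}
    (hF : IsEternalFamily G k m F) : 0 < m := by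
  obtain ⟨⟨D, hD⟩, hdom, -⟩ := hF
  obtain ⟨hcard, hdom⟩ := hdom D hD
  obtain ⟨x, hx, -⟩ := hdom (Classical.arbitrary V)
  exact hcard ▸ Multiset.card_pos_iff_exists_mem.2 ⟨x, hx⟩

theorem IsEternalFamily.two_le {m : ℕ} {F : Set (Multiset V)} (hF : IsEternalFamily G k m F)
    {x y : V} (hxy : ¬ WithinDist G k x y) : 2 ≤ m := by
  obtain ⟨⟨D, hD⟩, hdom, hmove⟩ := hF
  obtain ⟨D', hD', hxD', -⟩ := hmove D hD x
  obtain ⟨hcard, hdom'⟩ := hdom D' hD'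
  obtain ⟨z, hz, hzy⟩ := hdom' y
  have hpos : 0 < m := hcard ▸ Multiset.card_pos_iff_exists_mem.2 ⟨x, hxD'⟩
  by_contra! hm
  obtain ⟨a, rfl⟩ := Multiset.card_eq_one.1 (hcard.trans (by omega))
  rw [Multiset.mem_singleton] at hxD' hz
  exact hxy (hxD' ▸ hz ▸ hzy)

theorem isEternalFamily_pairs {c : V} (hc : ∀ w, WithinDist G k c w) :
    IsEternalFamily G k 2 (Set.range fun w : V => ({c, w} : Multiset V)) := by
  refine ⟨⟨_, c, rfl⟩, ?_, ?_⟩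
  · rintro _ ⟨w, rfl⟩
    exact ⟨rfl, fun y => ⟨c, Multiset.mem_cons_self c _, hc y⟩⟩
  · rintro _ ⟨w, rfl⟩ w'
    refine ⟨{c, w'}, ⟨w', rfl⟩, by simp, ?_⟩
    change Multiset.Rel _ (c ::ₘ w ::ₘ 0) (c ::ₘ w' ::ₘ 0)
    rw [Multiset.cons_swap c w']
    exact .cons (hc w') (.cons (hc w).symm .zero)

theorem isEternalFamily_singletons [Nonempty V] (h : ∀ x y, WithinDist G k x y) :
    IsEternalFamily G k 1 (Set.range fun w : V => ({w} : Multiset V)) := by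
  refine ⟨⟨_, Classical.arbitrary V, rfl⟩, ?_, ?_⟩
  · rintro _ ⟨x, rfl⟩
    exact ⟨rfl, fun y => ⟨x, Multiset.mem_singleton_self x, h x y⟩⟩
  · rintro _ ⟨x, rfl⟩ w
    exact ⟨{w}, ⟨w, rfl⟩, Multiset.mem_singleton_self w, .cons (h x w) .zero⟩

theorem eternalNum_eq {m : ℕ} {F : Set (Multiset V)} (hF : IsEternalFamily G k m F)
    (hmin : ∀ n F', IsEternalFamily G k n F' → m ≤ n) : eternalNum G k = m :=
  le_antisymm (Nat.sInf_le ⟨F, hF⟩) (le_csInf ⟨m, F, hF⟩ fun n ⟨F', hF'⟩ => hmin n F' hF')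

theorem small_diameter_values_general {V : Type u} (G : SimpleGraph V) (hG : G.IsTree)
    (k : ℕ) :
    (((k : ℕ∞) < G.ediam ∧ G.ediam < ((2 * k : ℕ) : ℕ∞)) → eternalNum G k = 2) ∧
    (G.ediam ≤ (k : ℕ∞) → eternalNum G k = 1) := by
  have : Nonempty V := hG.connected.nonempty
  refine ⟨fun ⟨hk, h2k⟩ => ?_, fun hdk => ?_⟩
  · obtain ⟨c, hc⟩ := hG.exists_eccent_le (k := k) (by exact_mod_cast h2k.le)
    obtain ⟨x, y, hxy⟩ : ∃ x y, ¬ WithinDist G k x y := by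
      simpa [withinDist_iff_edist_le, ediam_le_iff] using hk.not_ge
    exact eternalNum_eq
      (isEternalFamily_pairs fun w => withinDist_iff_edist_le.2 ((G.eccent_le_iff c k).1 hc w))
      fun _ _ hF => hF.two_le hxy
  · exact eternalNum_eq
      (isEternalFamily_singletons fun x y => withinDist_iff_edist_le.2 (ediam_le_iff.1 hdk x y))
      fun _ _ hF => hF.pos

/-- eternal distance-`k` domination numbers of trees of small diameter. -/
theorem small_diameter_values {V : Type u} [Fintype V] (G : SimpleGraph V) (hG : G.IsTree)
    (k : ℕ) (hk : 0 < k) :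
    (((k : ℕ∞) < G.ediam ∧ G.ediam < ((2 * k : ℕ) : ℕ∞)) → eternalNum G k = 2) ∧
    (G.ediam ≤ (k : ℕ∞) → eternalNum G k = 1) :=
  small_diameter_values_general G hG k

end EternalDom
end

section
/- Let k be a positive integer, let T' be a finite tree, and let T be the tree obtained from T' by attaching to each vertex v of T' a new pendant path P_v = v_1 v_2 ... v_k on k vertices via the edge (v, v_1). Then T has n = (k+1)|V(T')| vertices and \u03b3^\u221e_{all,k}(T) = |V(T')| = n/(k+1); in particular T attains the general upper bound \u2308 n/(k+1) \u2309 on the eternal distance-k domination number of connected graphs. -/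
open SimpleGraph

universe u v

namespace EternalDom

variable {V : Type u} {W : Type v}

/-- The tree obtained from `G` by attaching to each vertex `v` a new pendant path
`v₁ v₂ … v_k` on `k` vertices, via the edge `(v, v₁)`. -/
def attachPaths (G : SimpleGraph V) (k : ℕ) : SimpleGraph (V ⊕ V × Fin k) :=
  G.map Sum.inl ⊔
    fromEdgeSet
      ({e | ∃ (v : V) (h : 0 < k), e = s(Sum.inl v, Sum.inr (v, ⟨0, h⟩))} ∪
        {e | ∃ (v : V) (i : ℕ) (h : i + 1 < k),
            e = s(Sum.inr (v, ⟨i, Nat.lt_of_succ_lt h⟩), Sum.inr (v, ⟨i + 1, h⟩))})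

/-! The branches `{v, v₁, …, v_k}` partition the vertices into parts of diameter at most `k`;
one guard per branch, moving only inside its branch, answers every attack. Conversely the
end `v_k` of each branch is within distance `k` only of vertices of its own branch, so any
distance-`k` dominating multiset has a guard in every branch. -/

section General

variable {ι : Type*} {G : SimpleGraph V} {k : ℕ}

lemma WithinDist.map {H : SimpleGraph W} (f : G →g H) {x y : V} (h : WithinDist G k x y) :
    WithinDist H k (f x) (f y) := by
  obtain ⟨p, hp⟩ := h.1.exists_walk_length_eq_dist
  refine ⟨h.1.map f, ?_⟩
  calc H.dist (f x) (f y) ≤ (p.map f).length := dist_le _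
    _ = G.dist x y := by rw [Walk.length_map, hp]
    _ ≤ k := h.2

lemma withinDist_of_connected_of_card_le [Fintype V] (hG : G.Connected)
    (hcard : Fintype.card V ≤ k + 1) (x y : V) : WithinDist G k x y := by
  obtain ⟨p, hpath, hp⟩ := (hG x y).exists_path_of_dist
  exact ⟨hG x y, by have := hpath.length_lt; omega⟩

lemma _root_.SimpleGraph.Walk.apply_le_apply_add_length {f : V → ℕ}
    (hf : ∀ ⦃x y⦄, G.Adj x y → f x ≤ f y + 1) {x y : V} (p : G.Walk x y) :
    f x ≤ f y + p.length := by
  induction p with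
  | nil => simp
  | cons h p ih => have := hf h; rw [Walk.length_cons]; omega

lemma _root_.SimpleGraph.Reachable.apply_le_apply_add_dist {f : V → ℕ}
    (hf : ∀ ⦃x y⦄, G.Adj x y → f x ≤ f y + 1) {x y : V} (h : G.Reachable x y) :
    f x ≤ f y + G.dist x y := by
  obtain ⟨p, hp⟩ := h.exists_walk_length_eq_dist
  exact hp ▸ Walk.apply_le_apply_add_length hf p

lemma eternalNum_le {m : ℕ} {F : Set (Multiset V)} (hF : IsEternalFamily G k m F) :
    eternalNum G k ≤ m :=
  Nat.sInf_le ⟨F, hF⟩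

lemma le_eternalNum {m m' : ℕ} {F : Set (Multiset V)} (hF : IsEternalFamily G k m' F)
    (h : ∀ D, IsDistKDomMultiset G k D → m ≤ Multiset.card D) : m ≤ eternalNum G k := by
  refine le_csInf ⟨m', F, hF⟩ ?_
  rintro n ⟨F', ⟨D, hD⟩, hdom, -⟩
  obtain ⟨rfl, hDdom⟩ := hdom D hD
  exact h D hDdom

def transversals [Fintype ι] (π : V → ι) : Set (Multiset V) :=
  {D | ∃ s : ι → V, (∀ i, π (s i) = i) ∧ D = Finset.univ.val.map s}

theorem isEternalFamily_transversals [Fintype ι] (π : V → ι) (hπ : Function.Surjective π)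
    (hclose : ∀ x y, π x = π y → WithinDist G k x y) :
    IsEternalFamily G k (Fintype.card ι) (transversals π) := by
  classical
  refine ⟨⟨_, Function.surjInv hπ, Function.surjInv_eq hπ, rfl⟩, ?_, ?_⟩
  · rintro D ⟨s, hs, rfl⟩
    refine ⟨by simp, fun w => ⟨s (π w), Multiset.mem_map_of_mem _ (Finset.mem_univ _), ?_⟩⟩
    exact hclose _ _ (hs _)
  · rintro D ⟨s, hs, rfl⟩ w
    have hs' : ∀ i, π (Function.update s (π w) w i) = i := fun i => by
      rcases eq_or_ne i (π w) with rfl | hi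
      · simp
      · simp [hi, hs]
    refine ⟨_, ⟨_, hs', rfl⟩, ?_, ?_⟩
    · simpa using Multiset.mem_map_of_mem (Function.update s (π w) w) (Finset.mem_univ (π w))
    · rw [Multiset.rel_map]
      exact Multiset.rel_refl_of_refl_on fun i _ => hclose _ _ (by rw [hs, hs'])

theorem card_le_card_of_disjoint_balls [Fintype ι] (t : ι → V)
    (ht : ∀ x i j, WithinDist G k x (t i) → WithinDist G k x (t j) → i = j)
    {D : Multiset V} (hD : IsDistKDomMultiset G k D) : Fintype.card ι ≤ Multiset.card D := by
  classical
  choose g hgD hg using fun i => hD (t i)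
  calc Fintype.card ι = Finset.univ.card := Finset.card_univ.symm
    _ ≤ D.toFinset.card :=
      Finset.card_le_card_of_injOn g (fun i _ => Multiset.mem_toFinset.2 (hgD i))
        fun i _ j _ hij => ht (g i) i j (hg i) (hij ▸ hg j)
    _ ≤ Multiset.card D := Multiset.toFinset_card_le D

end General

namespace AttachPaths

variable {k : ℕ}

def branch : V ⊕ V × Fin k → V
  | Sum.inl v => v
  | Sum.inr p => p.1

/-- Position along the branch: `0` at the base vertex, `i + 1` at `vᵢ₊₁`. -/
def depth : V ⊕ V × Fin k → ℕ
  | Sum.inl _ => 0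
  | Sum.inr p => p.2 + 1

def branchVertex (v : V) : Fin (k + 1) → V ⊕ V × Fin k :=
  Fin.cases (Sum.inl v) fun i => Sum.inr (v, i)

lemma branch_surjective : Function.Surjective (branch : V ⊕ V × Fin k → V) :=
  fun v => ⟨Sum.inl v, rfl⟩

@[simp] lemma branch_branchVertex (v : V) (i : Fin (k + 1)) :
    branch (branchVertex v i) = v := by
  cases i using Fin.cases <;> rfl

@[simp] lemma depth_branchVertex (v : V) (i : Fin (k + 1)) : depth (branchVertex v i) = i := by
  cases i using Fin.cases <;> rfl

lemma exists_branchVertex_eq (x : V ⊕ V × Fin k) : ∃ i, branchVertex (branch x) i = x := by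
  rcases x with v | ⟨v, i⟩
  · exact ⟨0, rfl⟩
  · exact ⟨i.succ, by simp [branchVertex, branch]⟩

variable (G : SimpleGraph V)

lemma adj_cases {x y : V ⊕ V × Fin k} (h : (attachPaths G k).Adj x y) :
    (branch x = branch y ∧ (depth y = depth x + 1 ∨ depth x = depth y + 1)) ∨
      (depth x = 0 ∧ depth y = 0) := by
  simp only [attachPaths, sup_adj, fromEdgeSet_adj, Set.mem_union, Set.mem_ofPred_eq] at h
  rcases h with ⟨-, u, w, -, rfl, rfl⟩ | ⟨⟨v, _, he⟩ | ⟨v, i, _, he⟩, -⟩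
  · exact Or.inr ⟨rfl, rfl⟩
  all_goals
    rcases Sym2.eq_iff.1 he with ⟨rfl, rfl⟩ | ⟨rfl, rfl⟩ <;> simp [branch, depth]

lemma adj_branchVertex (v : V) (i : Fin k) :
    (attachPaths G k).Adj (branchVertex v i.castSucc) (branchVertex v i.succ) := by
  simp only [attachPaths, sup_adj, fromEdgeSet_adj, Set.mem_union, Set.mem_ofPred_eq]
  refine Or.inr ⟨?_, ?_⟩
  · rcases i with ⟨_ | i, hi⟩
    · exact Or.inl ⟨v, hi, rfl⟩
    · exact Or.inr ⟨v, i, hi, rfl⟩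
  · rcases i with ⟨_ | i, hi⟩ <;> simp [branchVertex]

def branchHom (v : V) : pathGraph (k + 1) →g attachPaths G k where
  toFun := branchVertex v
  map_rel' {i j} h := by
    wlog hij : i.val + 1 = j.val generalizing i j
    · exact (this h.symm ((pathGraph_adj.1 h).resolve_left hij)).symm
    obtain rfl | ⟨j, rfl⟩ := Fin.eq_zero_or_eq_succ j
    · simp at hij
    · obtain rfl : i = j.castSucc := Fin.ext (by simpa using hij)
      exact adj_branchVertex G v j

lemma withinDist_of_branch_eq (x y : V ⊕ V × Fin k) (h : branch x = branch y) :
    WithinDist (attachPaths G k) k x y := by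
  obtain ⟨i, hi⟩ := exists_branchVertex_eq x
  obtain ⟨j, hj⟩ := exists_branchVertex_eq y
  rw [← hi, ← hj, ← h]
  exact (withinDist_of_connected_of_card_le (pathGraph_connected k) (by simp) i j).map
    (branchHom G _)

/-- The end `v_k` of the branch over `v` (the vertex `v` itself when `k = 0`). -/
def tip (v : V) : V ⊕ V × Fin k := branchVertex v (Fin.last k)

/-- A lower bound for the distance to `tip v` that drops by at most one along each edge. -/
def tipPotential [DecidableEq V] (v : V) (x : V ⊕ V × Fin k) : ℕ :=
  if branch x = v then k - depth x else k + 1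

lemma tipPotential_tip [DecidableEq V] (v : V) :
    tipPotential v (tip v : V ⊕ V × Fin k) = 0 := by
  simp [tipPotential, tip]

lemma tipPotential_le_of_adj [DecidableEq V] (v : V) ⦃x y : V ⊕ V × Fin k⦄
    (h : (attachPaths G k).Adj x y) : tipPotential v x ≤ tipPotential v y + 1 := by
  unfold tipPotential
  rcases adj_cases G h with ⟨hb, hd⟩ | ⟨hx, hy⟩
  · rw [hb]; split_ifs <;> omega
  · rw [hx, hy]; split_ifs <;> omega

lemma branch_eq_of_withinDist_tip (v : V) {x : V ⊕ V × Fin k}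
    (h : WithinDist (attachPaths G k) k x (tip v)) : branch x = v := by
  classical
  by_contra hne
  have := h.1.apply_le_apply_add_dist (tipPotential_le_of_adj G v)
  rw [tipPotential_tip, zero_add, tipPotential, if_neg hne] at this
  exact absurd h.2 (by omega)

end AttachPaths

open AttachPaths in
theorem attachPaths_eternalNum_general {V : Type u} [Fintype V] (k : ℕ)
    (G : SimpleGraph V) :
    Fintype.card (V ⊕ V × Fin k) = (k + 1) * Fintype.card V ∧
    eternalNum (attachPaths G k) k = Fintype.card V ∧
    eternalNum (attachPaths G k) k = ⌈(Fintype.card (V ⊕ V × Fin k) : ℝ) / (k + 1)⌉₊ := by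
  have hcard : Fintype.card (V ⊕ V × Fin k) = (k + 1) * Fintype.card V := by
    simp only [Fintype.card_sum, Fintype.card_prod, Fintype.card_fin]
    ring
  have hF : IsEternalFamily (attachPaths G k) k (Fintype.card V) (transversals branch) :=
    isEternalFamily_transversals branch branch_surjective (withinDist_of_branch_eq G)
  have hnum : eternalNum (attachPaths G k) k = Fintype.card V :=
    (eternalNum_le hF).antisymm <| le_eternalNum hF fun D hD =>
      card_le_card_of_disjoint_balls tip
        (fun x i j hi hj => (branch_eq_of_withinDist_tip G i hi).symm.trans
          (branch_eq_of_withinDist_tip G j hj)) hD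
  refine ⟨hcard, hnum, ?_⟩
  rw [hnum, hcard, Nat.cast_mul, Nat.cast_succ,
    mul_div_cancel_left₀ _ (by positivity : ((k : ℝ) + 1) ≠ 0), Nat.ceil_natCast]

/-- attaching a pendant path on `k` vertices to every vertex of a tree `T'`
produces a tree on `(k+1)|V(T')|` vertices whose eternal distance-`k` domination number is
exactly `|V(T')| = n/(k+1)`; in particular it attains the general upper bound
`⌈n/(k+1)⌉`. -/
theorem attachPaths_eternalNum {V : Type u} [Fintype V] (k : ℕ) (hk : 0 < k)
    (G : SimpleGraph V) (hG : G.IsTree) :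
    Fintype.card (V ⊕ V × Fin k) = (k + 1) * Fintype.card V ∧
    eternalNum (attachPaths G k) k = Fintype.card V ∧
    eternalNum (attachPaths G k) k = ⌈(Fintype.card (V ⊕ V × Fin k) : ℝ) / (k + 1)⌉₊ :=
  attachPaths_eternalNum_general k G

end EternalDom
end
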